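/- Let H = (H0, H1) be a consistent partial condition over a nonempty finite set T in which every member of H0 ∪ H1 is nonempty. Suppose Z0 ⊇ Z1 ⊇ ⋯ ⊇ Z_{n-1} is a chain of nonempty subsets of T and σ0, …, σ_{n-1} ∈ {0,1} are alternating classifications (σ_{i+1} = 1 − σi) such that each Zi is the union of a nonempty family of sets from H_{σi}. Then every parity condition κ : T → ℕ that is consistent with H takes at least n distinct values on T, i.e. the image κ(T) has cardinality at least n. -/
import Mathlib


/-- The component of a partial condition `(H0, H1)` corresponding to a
classification `σ ∈ {0, 1}`. -/
def Hcomp {T : Type*} (H0 H1 : Set (Set T)) : ℕ → Set (Set T) :=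
  fun s => if s = 0 then H0 else H1

/-- Lower bound on the number of distinct priorities.  If
`Z 0 ⊇ Z 1 ⊇ ⋯ ⊇ Z (n-1)` is a chain of nonempty subsets of `T` with
alternating classifications `σ i ∈ {0,1}` such that each `Z i` is the union of
a nonempty family of sets from `H_{σ i}`, then every parity condition
`κ : T → ℕ` consistent with the partial condition `(H0, H1)` uses at least `n`
distinct priorities, i.e. the image of `κ` has cardinality at least `n`. -/
theorem parityCons_priority_lower_bound {T : Type*} [Fintype T] [Nonempty T]
    (H0 H1 : Set (Set T)) (hcons : H0 ∩ H1 = ∅)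
    (hne : ∀ X ∈ H0 ∪ H1, X.Nonempty)
    (n : ℕ) (Z : ℕ → Set T) (σ : ℕ → ℕ)
    (hZne : ∀ i, i < n → (Z i).Nonempty)
    (hdec : ∀ i, i + 1 < n → Z (i + 1) ⊆ Z i)
    (hσbound : ∀ i, i < n → σ i ≤ 1)
    (hσalt : ∀ i, i + 1 < n → σ (i + 1) = 1 - σ i)
    (hunion : ∀ i, i < n →
      ∃ G ⊆ Hcomp H0 H1 (σ i), G.Nonempty ∧ Z i = ⋃₀ G)
    (κ : T → ℕ)
    (hκ : (∀ X ∈ H0, Even (sInf (κ '' X))) ∧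
      ∀ X ∈ H1, ¬Even (sInf (κ '' X))) :
    n ≤ (Set.range κ).ncard := by
  classical
  set m : ℕ → ℕ := fun i => sInf (κ '' Z i) with hm
  have hmem : ∀ i, i < n → m i ∈ κ '' Z i := fun i hi =>
    Nat.sInf_mem ((hZne i hi).image κ)
  -- parity of m i matches σ i
  have hpar : ∀ i, i < n → (Even (m i) ↔ σ i = 0) := by
    intro i hi
    obtain ⟨G, hGsub, hGne, hZG⟩ := hunion i hi
    obtain ⟨t, htZ, htκ⟩ := hmem i hi
    rw [hZG] at htZ
    obtain ⟨X, hXG, htX⟩ := htZ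
    have hXle : sInf (κ '' X) ≤ m i := htκ ▸ Nat.sInf_le ⟨t, htX, rfl⟩
    have hXmem : sInf (κ '' X) ∈ κ '' X := Nat.sInf_mem ((Set.nonempty_of_mem htX).image κ)
    have hXge : m i ≤ sInf (κ '' X) := by
      apply Nat.sInf_le
      obtain ⟨u, huX, huκ⟩ := hXmem
      exact ⟨u, hZG ▸ ⟨X, hXG, huX⟩, huκ⟩
    have heq : sInf (κ '' X) = m i := le_antisymm hXle hXge
    have hσb := hσbound i hi
    interval_cases h : σ i
    · have : X ∈ H0 := by simpa [Hcomp, h] using hGsub hXG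
      simpa using heq ▸ hκ.1 X this
    · have : X ∈ H1 := by simpa [Hcomp, h] using hGsub hXG
      have := heq ▸ hκ.2 X this
      simpa using this
  -- strict monotonicity along the chain
  have hstep : ∀ i, i + 1 < n → m i < m (i + 1) := by
    intro i hi
    have hle : m i ≤ m (i + 1) := by
      obtain ⟨u, huZ, huκ⟩ := hmem (i + 1) hi
      calc m i ≤ κ u := Nat.sInf_le ⟨u, hdec i hi huZ, rfl⟩
        _ = m (i + 1) := huκ
    rcases lt_or_eq_of_le hle with h | h
    · exact h
    · exfalso
      have hp1 := hpar i (Nat.lt_of_succ_lt hi)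
      have hp2 := hpar (i + 1) hi
      have halt := hσalt i hi
      have hσb := hσbound i (Nat.lt_of_succ_lt hi)
      rw [← h] at hp2
      interval_cases hσ : σ i <;> simp [hσ, halt] at hp1 hp2 <;>
        exact (Nat.not_even_iff_odd.mpr (by assumption)) (by assumption)
  have hlt : ∀ i j, i < j → j < n → m i < m j := by
    intro i j hij hjn
    induction j with
    | zero => omega
    | succ k ih =>
      rcases Nat.lt_or_ge i k with h | h
      · exact lt_trans (ih h (Nat.lt_of_succ_lt hjn)) (hstep k hjn)
      · have : i = k := by omega
        exact this ▸ hstep k hjn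
  -- count
  have hfin : (Set.range κ).Finite := Set.finite_range κ
  have hsub : (Finset.range n).image m ⊆ hfin.toFinset := by
    intro x hx
    simp only [Finset.mem_image, Finset.mem_range] at hx
    obtain ⟨i, hi, rfl⟩ := hx
    obtain ⟨u, _, huκ⟩ := hmem i hi
    simp [Set.Finite.mem_toFinset]
    exact ⟨u, huκ⟩
  have hcard : ((Finset.range n).image m).card = n := by
    rw [Finset.card_image_of_injOn, Finset.card_range]
    intro a ha b hb hab
    simp only [Finset.coe_range, Set.mem_Iio] at ha hb
    by_contra hne'
    rcases Nat.lt_or_ge a b with h | h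
    · exact absurd hab (hlt a b h hb).ne
    · exact absurd hab.symm (hlt b a (by omega) ha).ne
  calc n = ((Finset.range n).image m).card := hcard.symm
    _ ≤ hfin.toFinset.card := Finset.card_le_card hsub
    _ = (Set.range κ).ncard := (Set.ncard_eq_toFinset_card _ hfin).symm
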